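/- arXiv:1508.02986 — 2 statements merged into one kernel-verified Lean document; each statement's English description precedes it below -/
import Mathlib

section
/- If a hypercone C ⊂ ℝ^{n+1} of base B(O,R), height H and apex Z is cut by the hyperplane orthogonal to its axis passing through its center of gravity (at height H/(n+2) above the base), then the volume of the part containing the apex equals Vol(C) · (1 − 1/(n+2))^{n+1} = Vol(C) / (1 + 1/(n+1))^{n+1}, which is at least e^{-1} · Vol(C). -/
/-!
The apex-side part of the cone is the image of the whole cone under the homothety centred at
the apex `(O, H)` with ratio `c = (n + 1) / (n + 2)`, so its volume is `c ^ (n + 1) • Vol(C)`.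
Since `c⁻¹ = 1 + 1 / (n + 1)` and `(1 + 1 / m) ^ m ≤ e`, this is at least `e⁻¹ • Vol(C)`.
-/

open MeasureTheory

section

variable {E : Type*} [NormedAddCommGroup E] [NormedSpace ℝ E]

def solidCone (O : E) (R H : ℝ) : Set (E × ℝ) :=
  {p | p.2 ∈ Set.Icc 0 H ∧ dist p.1 O ≤ (H - p.2) / H * R}

lemma homothety_apex_inv_mem_solidCone_iff {O : E} {R H c : ℝ} (hc0 : 0 < c) (hc1 : c ≤ 1)
    (p : E × ℝ) :
    AffineMap.homothety (O, H) c⁻¹ p ∈ solidCone O R H ↔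
      p ∈ solidCone O R H ∧ (1 - c) * H ≤ p.2 := by
  obtain ⟨x, t⟩ := p
  have hdist : dist (c⁻¹ • (x - O) + O) O = c⁻¹ * dist x O := by
    rw [dist_eq_norm, add_sub_cancel_right, norm_smul, Real.norm_of_nonneg (by positivity),
      dist_eq_norm]
  have hheight : H - (c⁻¹ * (t - H) + H) = c⁻¹ * (H - t) := by ring
  simp only [solidCone, AffineMap.homothety_apply, vsub_eq_sub, vadd_eq_add, Set.mem_ofPred_eq,
    Set.mem_Icc, Prod.fst_add, Prod.snd_add, Prod.fst_sub, Prod.snd_sub, Prod.smul_fst,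
    Prod.smul_snd, smul_eq_mul, hdist, hheight]
  have hbase : 0 ≤ c⁻¹ * (t - H) + H ↔ (1 - c) * H ≤ t := by
    rw [show c⁻¹ * (t - H) + H = c⁻¹ * (t - (1 - c) * H) by field_simp; ring,
      mul_nonneg_iff_of_pos_left (inv_pos.2 hc0), sub_nonneg]
  have htop : c⁻¹ * (t - H) + H ≤ H ↔ t ≤ H := by
    rw [add_le_iff_nonpos_left, ← mul_zero c⁻¹, mul_le_mul_iff_right₀ (inv_pos.2 hc0),
      sub_nonpos]
  rw [hbase, htop, mul_div_assoc, mul_assoc, mul_le_mul_iff_right₀ (inv_pos.2 hc0)]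
  constructor
  · rintro ⟨⟨hcut, htH⟩, hx⟩
    -- `(1 - c) * H ≤ t ≤ H` forces `H ≥ 0`, hence `t ≥ (1 - c) * H ≥ 0` as `c ≤ 1`.
    exact ⟨⟨⟨by nlinarith, htH⟩, hx⟩, hcut⟩
  · rintro ⟨⟨⟨-, htH⟩, hx⟩, hcut⟩
    exact ⟨⟨hcut, htH⟩, hx⟩

lemma image_homothety_apex_solidCone (O : E) (R H : ℝ) {c : ℝ} (hc0 : 0 < c) (hc1 : c ≤ 1) :
    AffineMap.homothety (O, H) c '' solidCone O R H =
      solidCone O R H ∩ {p | (1 - c) * H ≤ p.2} := by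
  rw [Set.image_eq_preimage_of_inverse (f := AffineMap.homothety (O, H) c)
    (g := AffineMap.homothety (O, H) c⁻¹)]
  · ext p; exact homothety_apex_inv_mem_solidCone_iff hc0 hc1 p
  · intro p
    rw [← AffineMap.homothety_mul_apply, inv_mul_cancel₀ hc0.ne', AffineMap.homothety_one]; rfl
  · intro p
    rw [← AffineMap.homothety_mul_apply, mul_inv_cancel₀ hc0.ne', AffineMap.homothety_one]; rfl

lemma volume_solidCone_inter_apex_side [MeasureSpace E] [BorelSpace E] [FiniteDimensional ℝ E]
    [(volume : Measure E).IsAddHaarMeasure]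
    (O : E) (R H : ℝ) {c : ℝ} (hc0 : 0 < c) (hc1 : c ≤ 1) :
    volume (solidCone O R H ∩ {p | (1 - c) * H ≤ p.2}) =
      ENNReal.ofReal (c ^ (Module.finrank ℝ E + 1)) * volume (solidCone O R H) := by
  have := Measure.prod.instIsAddHaarMeasure (volume : Measure E) (volume : Measure ℝ)
  rw [← image_homothety_apex_solidCone O R H hc0 hc1, Measure.addHaar_image_homothety,
    Module.finrank_prod, Module.finrank_self, abs_of_pos (by positivity)]

end

theorem cone_cut_at_centerOfGravity_general (n : ℕ) (O : EuclideanSpace ℝ (Fin n)) (R H : ℝ)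
    (C Cplus : Set (EuclideanSpace ℝ (Fin n) × ℝ))
    (hC : C = {p | p.2 ∈ Set.Icc (0:ℝ) H ∧ dist p.1 O ≤ (H - p.2) / H * R})
    (hCp : Cplus = C ∩ {p | H / ((n : ℝ) + 2) ≤ p.2}) :
    (volume Cplus).toReal = (volume C).toReal * (1 - 1 / ((n : ℝ) + 2)) ^ (n + 1) ∧
    (volume Cplus).toReal = (volume C).toReal / (1 + 1 / ((n : ℝ) + 1)) ^ (n + 1) ∧
    (Real.exp 1)⁻¹ * (volume C).toReal ≤ (volume Cplus).toReal := by
  set c : ℝ := (1 + 1 / ((n : ℝ) + 1))⁻¹ with hc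
  have hc0 : 0 < c := by positivity
  have hc1 : c ≤ 1 := inv_le_one_of_one_le₀ (le_add_of_nonneg_right (by positivity))
  have hcut : (1 - c) * H = H / ((n : ℝ) + 2) := by
    rw [hc]; field_simp; ring
  have hvol : (volume Cplus).toReal = (volume C).toReal * c ^ (n + 1) := by
    rw [hCp, hC, ← hcut, ← solidCone, volume_solidCone_inter_apex_side O R H hc0 hc1,
      ENNReal.toReal_mul, ENNReal.toReal_ofReal (by positivity), finrank_euclideanSpace_fin,
      mul_comm]
  refine ⟨?_, ?_, ?_⟩
  · rw [hvol, hc]; congr 2; field_simp; ring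
  · rw [hvol, hc, inv_pow, ← div_eq_mul_inv]
  · rw [hvol, hc, inv_pow, mul_comm]
    gcongr
    rw [one_div]
    exact_mod_cast Real.one_add_inv_pow_le_exp (n := n + 1)

/-- Cutting a hypercone by the hyperplane through its center of gravity orthogonal
to its axis: the apex-side part has volume Vol(C)·(1 − 1/(n+2))^{n+1}
= Vol(C)/(1 + 1/(n+1))^{n+1} ≥ e⁻¹·Vol(C). -/
theorem cone_cut_at_centerOfGravity (n : ℕ) (O : EuclideanSpace ℝ (Fin n)) (R H : ℝ)
    (hR : 0 < R) (hH : 0 < H)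
    (C Cplus : Set (EuclideanSpace ℝ (Fin n) × ℝ))
    (hC : C = {p | p.2 ∈ Set.Icc (0:ℝ) H ∧ dist p.1 O ≤ (H - p.2) / H * R})
    (hCp : Cplus = C ∩ {p | H / ((n : ℝ) + 2) ≤ p.2}) :
    (volume Cplus).toReal = (volume C).toReal * (1 - 1 / ((n : ℝ) + 2)) ^ (n + 1) ∧
    (volume Cplus).toReal = (volume C).toReal / (1 + 1 / ((n : ℝ) + 1)) ^ (n + 1) ∧
    (Real.exp 1)⁻¹ * (volume C).toReal ≤ (volume Cplus).toReal :=
  cone_cut_at_centerOfGravity_general n O R H C Cplus hC hCp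
end

section
/- If a convex body K ⊂ ℝ^{n+1} is spherically symmetric along the axis e_{n+1} and is cut by a hyperplane through its center of gravity orthogonal to e_{n+1}, and C is the cone with the same base disk K ∩ W, apex on the positive axis, chosen so that Vol(C^+) = Vol(K^+) and Vol(C) = Vol(K), then the axial coordinate of cg(C) is at least that of cg(K). -/
/-!
Since `C` and `K` have equal volumes both above and below `W`, it suffices to compare the
integrals of the axial coordinate over the two halves separately. For two sets of equal
finite measure such a comparison follows from a crossing height `b`: if `s \ u` lies below
`b` and `u \ s` above it, then `∫ₛ x ≤ ∫ᵤ x`.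

Below `W`, `K` lies inside the extended cone: a point of `K` outside it would, by convexity
and the base disk, squeeze `K⁺` into a strictly narrower cone, and the open gap between the
two cones would give `Vol(K⁺) < Vol(C⁺)`. Similarly `K` has no point above the apex. Above
`W`, the heights at which the slice of `K` contains that of `C` form an interval starting
at `c`, and above its supremum `t` the slices of `K` lie inside those of `C`. So `B` is a
crossing height for the lower halves and `t` one for the upper halves.
-/

open MeasureTheory Metric Set
open scoped ENNReal

theorem measure_lt_of_subset_of_isOpen {α : Type*} [TopologicalSpace α] [MeasurableSpace α]
    [OpensMeasurableSpace α] {μ : Measure α} [μ.IsOpenPosMeasure] {s u U : Set α}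
    (hsu : s ⊆ u) (hs : μ s ≠ ∞) (hU : IsOpen U) (hUne : U.Nonempty) (hUu : U ⊆ u)
    (hsU : Disjoint s U) : μ s < μ u :=
  calc μ s < μ s + μ U := ENNReal.lt_add_right hs (hU.measure_ne_zero μ hUne)
    _ = μ (s ∪ U) := (measure_union hsU hU.measurableSet).symm
    _ ≤ μ u := measure_mono (union_subset hsu hUu)

theorem setIntegral_le_setIntegral_of_crossing {α : Type*} [MeasurableSpace α] {μ : Measure α}
    {s u : Set α} {f : α → ℝ} (b : ℝ) (hs : MeasurableSet s) (hu : MeasurableSet u)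
    (hμ : μ s = μ u) (hfin : μ s ≠ ∞) (hfs : IntegrableOn f s μ)
    (hfu : IntegrableOn f u μ)
    (hsu : ∀ p ∈ s, p ∉ u → f p ≤ b) (hus : ∀ p ∈ u, p ∉ s → b ≤ f p) :
    ∫ p in s, f p ∂μ ≤ ∫ p in u, f p ∂μ := by
  have hbs : IntegrableOn (fun _ => b) s μ := integrableOn_const hfin
  have hbu : IntegrableOn (fun _ => b) u μ := integrableOn_const (hμ ▸ hfin)
  have key : ∫ p in s, (f p - b) ∂μ ≤ ∫ p in u, (f p - b) ∂μ := by
    rw [← integral_indicator hs, ← integral_indicator hu]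
    refine integral_mono ((integrable_indicator_iff hs).2 (hfs.sub hbs))
      ((integrable_indicator_iff hu).2 (hfu.sub hbu)) fun p => ?_
    by_cases hps : p ∈ s <;> by_cases hpu : p ∈ u <;>
      simp only [indicator_of_mem, indicator_of_notMem, hps, hpu, le_refl, not_false_eq_true]
    · exact sub_nonpos.2 (hsu p hps hpu)
    · exact sub_nonneg.2 (hus p hpu hps)
  rwa [integral_sub hfs hbs, integral_sub hfu hbu, setIntegral_const, setIntegral_const,
    measureReal_def, measureReal_def, hμ, sub_le_sub_iff_right] at key

theorem isCompact_setOf_norm_le {E : Type*} [NormedAddCommGroup E] [ProperSpace E]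
    {g : ℝ → ℝ} (hg : Continuous g) (a b : ℝ) :
    IsCompact {p : E × ℝ | p.2 ∈ Icc a b ∧ ‖p.1‖ ≤ g p.2} := by
  have hIcc : IsCompact (Icc a b) := isCompact_Icc
  obtain ⟨M, hM⟩ := hIcc.exists_bound_of_continuousOn hg.continuousOn
  refine ((isCompact_closedBall (0 : E) M).prod hIcc).of_isClosed_subset
    ((isClosed_Icc.preimage continuous_snd).inter
      (isClosed_le (continuous_norm.comp continuous_fst) (hg.comp continuous_snd))) ?_
  rintro ⟨x, l⟩ ⟨hl, hx⟩
  exact ⟨mem_closedBall_zero_iff.2 (hx.trans ((Real.le_norm_self _).trans (hM l hl))), hl⟩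

noncomputable def coneRadius (c A R₀ l : ℝ) : ℝ := (A - l) / (A - c) * R₀

theorem coneRadius_self {c A : ℝ} (R₀ : ℝ) (hcA : c ≠ A) :
    coneRadius c A R₀ c = R₀ := by
  rw [coneRadius, div_self (sub_ne_zero.2 hcA.symm), one_mul]

theorem coneRadius_nonneg {c A R₀ l : ℝ} (hR₀ : 0 ≤ R₀) (hcA : c < A) (hl : l ≤ A) :
    0 ≤ coneRadius c A R₀ l :=
  mul_nonneg (div_nonneg (sub_nonneg.2 hl) (sub_pos.2 hcA).le) hR₀

theorem coneRadius_eq_interpolation {c A R₀ l l' : ℝ} (hcA : c ≠ A) (hcl' : c ≠ l') :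
    coneRadius c A R₀ l = (R₀ * (l' - l) + coneRadius c A R₀ l' * (l - c)) / (l' - c) := by
  have h₁ : A - c ≠ 0 := sub_ne_zero.2 hcA.symm
  have h₂ : l' - c ≠ 0 := sub_ne_zero.2 hcl'.symm
  simp only [coneRadius]
  field_simp
  ring

theorem continuous_coneRadius (c A R₀ : ℝ) : Continuous (coneRadius c A R₀) := by
  unfold coneRadius; fun_prop

theorem coneRadius_eq_sub_mul {c A : ℝ} (R₀ l : ℝ) (hcA : c ≠ A) :
    coneRadius c A R₀ l = R₀ - R₀ / (A - c) * (l - c) := by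
  have h : A - c ≠ 0 := sub_ne_zero.2 hcA.symm
  simp only [coneRadius]
  field_simp
  ring

/-- The solid cone with apex `(0, A)` and base disk of radius `R₀` at height `c`, extended
down to height `B`; `truncatedCone E c c A R₀` is its part above the base. -/
def truncatedCone (E : Type*) [NormedAddCommGroup E] (B c A R₀ : ℝ) : Set (E × ℝ) :=
  {p | p.2 ∈ Icc B A ∧ ‖p.1‖ ≤ coneRadius c A R₀ p.2}

section Slices

variable {E : Type*} [NormedAddCommGroup E] {K : Set (E × ℝ)}

def IsAxiallySymmetric (K : Set (E × ℝ)) : Prop :=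
  ∀ ⦃x : E⦄ ⦃l : ℝ⦄, (x, l) ∈ K → closedBall 0 ‖x‖ ⊆ {y | (y, l) ∈ K}

theorem isAxiallySymmetric_of_slices
    (hsym : ∀ l : ℝ, {x | (x, l) ∈ K} = ∅ ∨
      ∃ r : ℝ, 0 ≤ r ∧ {x | (x, l) ∈ K} = closedBall (0 : E) r) :
    IsAxiallySymmetric K := by
  intro x l hx
  rcases hsym l with h | ⟨r, -, h⟩
  · exact absurd (h ▸ hx : x ∈ (∅ : Set E)) (notMem_empty x)
  · rw [h]
    exact closedBall_subset_closedBall (mem_closedBall_zero_iff.1 (h ▸ hx : x ∈ closedBall 0 r))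

variable [NormedSpace ℝ E]

theorem Convex.closedBall_subset_slice_add (hK : Convex ℝ K) {r₁ r₂ l₁ l₂ a b : ℝ}
    (h₁ : closedBall (0 : E) r₁ ⊆ {x | (x, l₁) ∈ K})
    (h₂ : closedBall (0 : E) r₂ ⊆ {x | (x, l₂) ∈ K})
    (hr₁ : 0 ≤ r₁) (hr₂ : 0 ≤ r₂) (ha : 0 ≤ a) (hb : 0 ≤ b) (hab : a + b = 1) :
    closedBall (0 : E) (a * r₁ + b * r₂) ⊆ {x | (x, a * l₁ + b * l₂) ∈ K} := by
  intro z hz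
  rw [mem_closedBall_zero_iff] at hz
  set r := a * r₁ + b * r₂
  have hscale : ∀ {r' : ℝ}, 0 ≤ r' → ‖(r' / r) • z‖ ≤ r' := fun {r'} hr' => by
    rw [norm_smul, Real.norm_of_nonneg (div_nonneg hr' (norm_nonneg z |>.trans hz)),
      div_mul_eq_mul_div, mul_div_assoc]
    exact mul_le_of_le_one_right hr' (div_le_one_of_le₀ hz (norm_nonneg z |>.trans hz))
  have hz' : a • (r₁ / r) • z + b • (r₂ / r) • z = z := by
    rw [smul_smul, smul_smul, ← add_smul, show a * (r₁ / r) + b * (r₂ / r) = r / r by ring]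
    rcases eq_or_ne r 0 with h | h
    · simp [norm_le_zero_iff.1 (h ▸ hz)]
    · rw [div_self h, one_smul]
  have hmem := hK (h₁ (mem_closedBall_zero_iff.2 (hscale hr₁)))
    (h₂ (mem_closedBall_zero_iff.2 (hscale hr₂))) ha hb hab
  simpa [hz'] using hmem

theorem Convex.closedBall_subset_slice_of_mem_Icc (hK : Convex ℝ K) {r₁ r₂ l₁ l₂ l : ℝ}
    (h₁ : closedBall (0 : E) r₁ ⊆ {x | (x, l₁) ∈ K})
    (h₂ : closedBall (0 : E) r₂ ⊆ {x | (x, l₂) ∈ K})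
    (hr₁ : 0 ≤ r₁) (hr₂ : 0 ≤ r₂) (hl₁₂ : l₁ < l₂) (hl : l ∈ Icc l₁ l₂) :
    closedBall (0 : E) ((r₁ * (l₂ - l) + r₂ * (l - l₁)) / (l₂ - l₁))
      ⊆ {x | (x, l) ∈ K} := by
  have hd : 0 < l₂ - l₁ := sub_pos.2 hl₁₂
  have h := hK.closedBall_subset_slice_add h₁ h₂ hr₁ hr₂
    (div_nonneg (sub_nonneg.2 hl.2) hd.le) (div_nonneg (sub_nonneg.2 hl.1) hd.le)
    (by field_simp; ring)
  have hlev : (l₂ - l) / (l₂ - l₁) * l₁ + (l - l₁) / (l₂ - l₁) * l₂ = l := by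
    field_simp; ring
  have hrad : (l₂ - l) / (l₂ - l₁) * r₁ + (l - l₁) / (l₂ - l₁) * r₂
      = (r₁ * (l₂ - l) + r₂ * (l - l₁)) / (l₂ - l₁) := by
    field_simp
  rwa [hlev, hrad] at h

theorem Convex.norm_mul_add_norm_mul_le [Nontrivial E] (hK : Convex ℝ K)
    (hax : IsAxiallySymmetric K) {c R₀ l₀ m : ℝ} {x y : E}
    (hbase : {x | (x, c) ∈ K} ⊆ closedBall (0 : E) R₀)
    (hx : (x, l₀) ∈ K) (hy : (y, m) ∈ K) (hl₀ : l₀ < c) (hm : c ≤ m) :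
    ‖x‖ * (m - c) + ‖y‖ * (c - l₀) ≤ R₀ * (m - l₀) := by
  have hd : 0 < m - l₀ := by linarith
  have hball := hK.closedBall_subset_slice_of_mem_Icc (hax hx) (hax hy) (norm_nonneg _)
    (norm_nonneg _) (hl₀.trans_le hm) ⟨hl₀.le, hm⟩
  obtain ⟨z, hz⟩ := exists_norm_eq E
    (div_nonneg (add_nonneg (mul_nonneg (norm_nonneg x) (sub_nonneg.2 hm))
      (mul_nonneg (norm_nonneg y) (sub_nonneg.2 hl₀.le))) hd.le)
  have hzR := hbase (hball (mem_closedBall_zero_iff.2 hz.le))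
  rw [mem_closedBall_zero_iff, hz, div_le_iff₀ hd] at hzR
  linarith

theorem Convex.exists_crossing (hK : Convex ℝ K) (hax : IsAxiallySymmetric K)
    {c A R₀ : ℝ} (hR₀ : 0 ≤ R₀) (hcA : c < A)
    (hbase : closedBall (0 : E) R₀ ⊆ {x | (x, c) ∈ K}) (hleA : ∀ p ∈ K, p.2 ≤ A) :
    ∃ t, (∀ p ∈ truncatedCone E c c A R₀, p.2 < t → p ∈ K) ∧
      ∀ p ∈ K, c ≤ p.2 → t < p.2 → p ∈ truncatedCone E c c A R₀ := by
  set S := {l | l ∈ Icc c A ∧ closedBall (0 : E) (coneRadius c A R₀ l) ⊆ {x | (x, l) ∈ K}}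
  have hcS : c ∈ S := ⟨⟨le_rfl, hcA.le⟩, by rwa [coneRadius_self R₀ hcA.ne]⟩
  have hSbdd : BddAbove S := ⟨A, fun l hl => hl.1.2⟩
  refine ⟨sSup S, ?_, ?_⟩
  · rintro ⟨z, l⟩ ⟨hl, hz⟩ hlt
    obtain ⟨l', hl'S, hll'⟩ := exists_lt_of_lt_csSup ⟨c, hcS⟩ hlt
    have hcl' : c < l' := hl.1.trans_lt hll'
    have hball := hK.closedBall_subset_slice_of_mem_Icc hbase hl'S.2 hR₀
      (coneRadius_nonneg hR₀ hcA hl'S.1.2) hcl' ⟨hl.1, hll'.le⟩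
    rw [← coneRadius_eq_interpolation hcA.ne hcl'.ne] at hball
    exact hball (mem_closedBall_zero_iff.2 hz)
  · rintro ⟨y, m⟩ hy (hcm : c ≤ m) (htm : sSup S < m)
    refine ⟨⟨hcm, hleA _ hy⟩, show ‖y‖ ≤ coneRadius c A R₀ m from ?_⟩
    by_contra! hym
    set ν := (sSup S + m) / 2 with hν
    have hcν : c < ν := by linarith [le_csSup hSbdd hcS]
    have hνm : ν < m := by linarith
    have hrad : coneRadius c A R₀ ν ≤ (R₀ * (m - ν) + ‖y‖ * (ν - c)) / (m - c) := by
      rw [coneRadius_eq_interpolation hcA.ne (hcν.trans hνm).ne (l' := m)]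
      gcongr
    have hνS : ν ∈ S := ⟨⟨hcν.le, hνm.le.trans (hleA _ hy)⟩,
      (closedBall_subset_closedBall hrad).trans (hK.closedBall_subset_slice_of_mem_Icc hbase
        (hax hy) hR₀ (norm_nonneg y) (hcν.trans hνm) ⟨hcν.le, hνm.le⟩)⟩
    linarith [le_csSup hSbdd hνS]

end Slices

section Volume

variable {E : Type*} [NormedAddCommGroup E] [NormedSpace ℝ E] [MeasurableSpace E]
  [OpensMeasurableSpace (E × ℝ)] {μ : Measure (E × ℝ)} [μ.IsOpenPosMeasure]
  {K : Set (E × ℝ)} {c A R₀ : ℝ}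

theorem Convex.snd_le_of_measure_eq (hK : Convex ℝ K) (hax : IsAxiallySymmetric K)
    (hR₀ : 0 < R₀) (hcA : c < A) (hbase : closedBall (0 : E) R₀ ⊆ {x | (x, c) ∈ K})
    (hvol : μ (K ∩ {p | c ≤ p.2}) = μ (truncatedCone E c c A R₀))
    (hfin : μ (truncatedCone E c c A R₀) ≠ ∞) :
    ∀ p ∈ K, p.2 ≤ A := by
  rintro ⟨y, m⟩ hy
  show m ≤ A
  by_contra! hAm
  have hcm : c < m := hcA.trans hAm
  set r : ℝ → ℝ := fun ν => R₀ * (m - ν) / (m - c)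
  have hcone : ∀ ν ∈ Icc c m, closedBall (0 : E) (r ν) ⊆ {x | (x, ν) ∈ K} := by
    intro ν hν
    refine (closedBall_subset_closedBall ?_).trans
      (hK.closedBall_subset_slice_of_mem_Icc hbase (hax hy) hR₀.le (norm_nonneg y) hcm hν)
    exact div_le_div_of_nonneg_right
      (le_add_of_nonneg_right (mul_nonneg (norm_nonneg y) (sub_nonneg.2 hν.1))) (sub_pos.2 hcm).le
  have hsub : truncatedCone E c c A R₀ ⊆ K ∩ {p | c ≤ p.2} := by
    rintro ⟨z, ν⟩ ⟨⟨hcν, hνA⟩, hz⟩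
    refine ⟨hcone ν ⟨hcν, by linarith⟩ (mem_closedBall_zero_iff.2 (hz.trans ?_)), hcν⟩
    simp only [coneRadius, r]
    rw [div_mul_eq_mul_div, mul_comm, div_le_div_iff₀ (by linarith) (by linarith)]
    nlinarith [mul_nonneg hR₀.le (mul_nonneg (sub_nonneg.2 hcν) (sub_nonneg.2 hAm.le))]
  set U : Set (E × ℝ) := {p | A < p.2} ∩ {p | p.2 < m} ∩ {p | ‖p.1‖ < r p.2}
  have hU : IsOpen U := ((isOpen_lt continuous_const continuous_snd).inter
    (isOpen_lt continuous_snd continuous_const)).inter (isOpen_lt (by fun_prop) (by fun_prop))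
  have hUne : U.Nonempty := ⟨(0, (A + m) / 2), ⟨show A < (A + m) / 2 by linarith,
    show (A + m) / 2 < m by linarith⟩, show ‖(0 : E)‖ < r ((A + m) / 2) by
      rw [norm_zero]; exact div_pos (mul_pos hR₀ (by linarith)) (by linarith)⟩
  refine (measure_lt_of_subset_of_isOpen hsub hfin hU hUne ?_ ?_).ne hvol.symm
  · rintro ⟨z, ν⟩ ⟨⟨(hAν : A < ν), (hνm : ν < m)⟩, (hz : ‖z‖ < r ν)⟩
    exact ⟨hcone ν ⟨by linarith, hνm.le⟩ (mem_closedBall_zero_iff.2 hz.le),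
      show c ≤ ν by linarith⟩
  · exact disjoint_left.2 fun p hp hpU => hpU.1.1.not_ge hp.1.2

theorem Convex.norm_le_coneRadius_of_measure_eq (hK : Convex ℝ K) (hax : IsAxiallySymmetric K)
    (hR₀ : 0 < R₀) (hcA : c < A) (hbase : {x | (x, c) ∈ K} ⊆ closedBall (0 : E) R₀)
    (hvol : μ (K ∩ {p | c ≤ p.2}) = μ (truncatedCone E c c A R₀))
    (hfin : μ (truncatedCone E c c A R₀) ≠ ∞) :
    ∀ p ∈ K, p.2 < c → ‖p.1‖ ≤ coneRadius c A R₀ p.2 := by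
  rintro ⟨x, l₀⟩ hx (hl₀ : l₀ < c)
  show ‖x‖ ≤ coneRadius c A R₀ l₀
  by_contra! hbad
  have hcl : 0 < c - l₀ := sub_pos.2 hl₀
  set κ := R₀ / (A - c)
  have hκ : 0 < κ := div_pos hR₀ (sub_pos.2 hcA)
  have hκA : κ * (A - c) = R₀ := div_mul_cancel₀ R₀ (sub_pos.2 hcA).ne'
  have hρ : ∀ l, coneRadius c A R₀ l = R₀ - κ * (l - c) := fun l =>
    coneRadius_eq_sub_mul R₀ l hcA.ne
  have hx0 : x ≠ 0 := by
    rintro rfl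
    rw [norm_zero, hρ] at hbad
    nlinarith
  have : Nontrivial E := ⟨⟨x, 0, hx0⟩⟩
  -- `K` lies above level `c` inside the steeper cone through the base rim and `(x, l₀)`.
  set σ := (‖x‖ - R₀) / (c - l₀)
  have hκσ : κ < σ := by
    rw [lt_div_iff₀ hcl]
    rw [hρ] at hbad
    linarith
  have hupper : ∀ y m, (y, m) ∈ K → c ≤ m → ‖y‖ ≤ R₀ - σ * (m - c) := by
    intro y m hy hm
    have h := hK.norm_mul_add_norm_mul_le hax hbase hx hy hl₀ hm
    rw [show σ * (m - c) = (‖x‖ - R₀) * (m - c) / (c - l₀) by ring, le_sub_iff_add_le,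
      add_div' _ _ _ hcl.ne', div_le_iff₀ hcl]
    linarith
  have hsub : K ∩ {p | c ≤ p.2} ⊆ truncatedCone E c c A R₀ := by
    rintro ⟨y, m⟩ ⟨hy, hm : c ≤ m⟩
    have h := hupper y m hy hm
    have hmc := mul_le_mul_of_nonneg_right hκσ.le (sub_nonneg.2 hm)
    refine ⟨⟨hm, ?_⟩, show ‖y‖ ≤ coneRadius c A R₀ m by rw [hρ]; linarith⟩
    nlinarith [norm_nonneg y]
  set m₀ := c + R₀ / σ
  have hσ : 0 < σ := hκ.trans hκσ
  have hm₀ : σ * (m₀ - c) = R₀ := by simp only [m₀]; field_simp; ring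
  have hcm₀ : c < m₀ := lt_add_of_pos_right c (div_pos hR₀ hσ)
  have hρm₀ : 0 < coneRadius c A R₀ m₀ := by
    rw [hρ]
    nlinarith [mul_lt_mul_of_pos_right hκσ (sub_pos.2 hcm₀)]
  obtain ⟨z, hz⟩ := exists_norm_eq E (half_pos hρm₀).le
  set U : Set (E × ℝ) := {p | c < p.2} ∩ {p | R₀ - σ * (p.2 - c) < ‖p.1‖} ∩
    {p | ‖p.1‖ < coneRadius c A R₀ p.2}
  have hU : IsOpen U := ((isOpen_lt continuous_const continuous_snd).inter
    (isOpen_lt (by fun_prop) (by fun_prop))).inter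
    (isOpen_lt (by fun_prop) ((continuous_coneRadius c A R₀).comp continuous_snd))
  have hUne : U.Nonempty := ⟨(z, m₀), ⟨hcm₀, show R₀ - σ * (m₀ - c) < ‖z‖ by
      rw [hm₀, hz, sub_self]; exact half_pos hρm₀⟩,
    show ‖z‖ < _ by rw [hz]; exact half_lt_self hρm₀⟩
  refine (measure_lt_of_subset_of_isOpen hsub (hvol ▸ hfin) hU hUne ?_ ?_).ne hvol
  · rintro ⟨y, m⟩ ⟨⟨(hcm : c < m), -⟩, (hy : ‖y‖ < coneRadius c A R₀ m)⟩
    refine ⟨⟨hcm.le, ?_⟩, hy.le⟩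
    rw [hρ] at hy
    nlinarith [norm_nonneg y]
  · exact disjoint_left.2 fun p hp hpU => hpU.1.2.not_ge (hupper p.1 p.2 hp.1 hp.2)

variable [ProperSpace E] [IsFiniteMeasureOnCompacts μ]

theorem Convex.setIntegral_inter_le_truncatedCone (hKc : IsCompact K) (hK : Convex ℝ K)
    (hax : IsAxiallySymmetric K) (hR₀ : 0 < R₀) (hcA : c < A)
    (hbase : {x | (x, c) ∈ K} = closedBall (0 : E) R₀)
    (hvol : μ (K ∩ {p | c ≤ p.2}) = μ (truncatedCone E c c A R₀)) :
    ∫ p in K ∩ {p | c ≤ p.2}, p.2 ∂μ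
      ≤ ∫ p in truncatedCone E c c A R₀, p.2 ∂μ := by
  have hfin : μ (K ∩ {p | c ≤ p.2}) ≠ ∞ :=
    ((measure_mono inter_subset_left).trans_lt hKc.measure_lt_top).ne
  have hCc : IsCompact (truncatedCone E c c A R₀) :=
    isCompact_setOf_norm_le (continuous_coneRadius c A R₀) c A
  obtain ⟨t, hCK, hKC⟩ := hK.exists_crossing hax hR₀.le hcA hbase.ge
    (hK.snd_le_of_measure_eq hax hR₀ hcA hbase.ge hvol (hvol ▸ hfin))
  refine setIntegral_le_setIntegral_of_crossing t
    (hKc.measurableSet.inter (measurableSet_le measurable_const measurable_snd))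
    hCc.measurableSet hvol hfin
    ((continuous_snd.continuousOn.integrableOn_compact hKc).mono_set inter_subset_left)
    (continuous_snd.continuousOn.integrableOn_compact hCc) ?_ ?_
  · rintro p ⟨hpK, hpc⟩ hpC
    by_contra! htp
    exact hpC (hKC p hpK hpc htp)
  · rintro p hpC hpK
    by_contra! hpt
    exact hpK ⟨hCK p hpC hpt, hpC.1.1⟩

theorem Convex.setIntegral_sdiff_le_truncatedCone (hKc : IsCompact K) (hK : Convex ℝ K)
    (hax : IsAxiallySymmetric K) {B : ℝ} (hR₀ : 0 < R₀) (hcA : c < A)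
    (hbase : {x | (x, c) ∈ K} ⊆ closedBall (0 : E) R₀)
    (hvol : μ (K ∩ {p | c ≤ p.2}) = μ (truncatedCone E c c A R₀))
    (hvol' : μ (K \ {p | c ≤ p.2}) = μ (truncatedCone E B c A R₀ \ {p | c ≤ p.2})) :
    ∫ p in K \ {p | c ≤ p.2}, p.2 ∂μ
      ≤ ∫ p in truncatedCone E B c A R₀ \ {p | c ≤ p.2}, p.2 ∂μ := by
  have hH : MeasurableSet {p : E × ℝ | c ≤ p.2} :=
    measurableSet_le measurable_const measurable_snd
  have hCc : IsCompact (truncatedCone E B c A R₀) :=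
    isCompact_setOf_norm_le (continuous_coneRadius c A R₀) B A
  have hbelow := hK.norm_le_coneRadius_of_measure_eq hax hR₀ hcA hbase hvol
    (hvol ▸ ((measure_mono inter_subset_left).trans_lt hKc.measure_lt_top).ne)
  refine setIntegral_le_setIntegral_of_crossing B (hKc.measurableSet.diff hH)
    (hCc.measurableSet.diff hH) hvol' ((measure_mono sdiff_subset).trans_lt
      hKc.measure_lt_top).ne
    ((continuous_snd.continuousOn.integrableOn_compact hKc).mono_set sdiff_subset)
    ((continuous_snd.continuousOn.integrableOn_compact hCc).mono_set sdiff_subset) ?_ ?_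
  · rintro p ⟨hpK, hpH⟩ hpC
    by_contra! hBp
    have hpc : p.2 < c := not_le.1 hpH
    exact hpC ⟨⟨⟨hBp.le, (hpc.trans hcA).le⟩, hbelow p hpK hpc⟩, hpH⟩
  · rintro p ⟨hpC, -⟩ -
    exact hpC.1.1

end Volume

theorem cone_centerOfGravity_shift_general (n : ℕ)
    (K : Set (EuclideanSpace ℝ (Fin n) × ℝ))
    (hKc : IsCompact K) (hKconv : Convex ℝ K)
    (hsym : ∀ lam : ℝ, {x | (x, lam) ∈ K} = ∅ ∨
      ∃ r : ℝ, 0 ≤ r ∧ {x | (x, lam) ∈ K}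
        = Metric.closedBall (0 : EuclideanSpace ℝ (Fin n)) r)
    (c : ℝ)
    (R0 A B : ℝ) (hR0 : 0 < R0) (hA : c < A) (hB : B ≤ c)
    (hbase : {x | (x, c) ∈ K} = Metric.closedBall (0 : EuclideanSpace ℝ (Fin n)) R0)
    (C : Set (EuclideanSpace ℝ (Fin n) × ℝ))
    (hC : C = {p | p.2 ∈ Set.Icc B A ∧ ‖p.1‖ ≤ (A - p.2) / (A - c) * R0})
    (hvplus : volume (C ∩ {p | c ≤ p.2}) = volume (K ∩ {p | c ≤ p.2}))
    (hvtot : volume C = volume K) :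
    (volume K).toReal⁻¹ * ∫ p in K, p.2 ≤ (volume C).toReal⁻¹ * ∫ p in C, p.2 := by
  obtain rfl : C = truncatedCone (EuclideanSpace ℝ (Fin n)) B c A R0 := hC
  have hax := isAxiallySymmetric_of_slices hsym
  set H : Set (EuclideanSpace ℝ (Fin n) × ℝ) := {p | c ≤ p.2}
  have hH : MeasurableSet H := measurableSet_le measurable_const measurable_snd
  have hCH : truncatedCone (EuclideanSpace ℝ (Fin n)) B c A R0 ∩ H
      = truncatedCone (EuclideanSpace ℝ (Fin n)) c c A R0 := by
    ext p
    exact ⟨fun ⟨⟨⟨_, hpA⟩, hp⟩, hcp⟩ => ⟨⟨hcp, hpA⟩, hp⟩,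
      fun ⟨⟨hcp, hpA⟩, hp⟩ => ⟨⟨⟨hB.trans hcp, hpA⟩, hp⟩, hcp⟩⟩
  have hvol := hCH ▸ hvplus.symm
  have hvol' :
      volume (K \ H) = volume (truncatedCone (EuclideanSpace ℝ (Fin n)) B c A R0 \ H) := by
    have hsplit := measure_inter_add_sdiff (μ := volume) (truncatedCone _ B c A R0) hH
    rw [hvplus, hvtot, ← measure_inter_add_sdiff K hH] at hsplit
    exact ((ENNReal.add_right_inj
      ((measure_mono inter_subset_left).trans_lt hKc.measure_lt_top).ne).1 hsplit).symm
  have hCc : IsCompact (truncatedCone (EuclideanSpace ℝ (Fin n)) B c A R0) :=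
    isCompact_setOf_norm_le (continuous_coneRadius c A R0) B A
  rw [hvtot, ← integral_inter_add_sdiff hH (continuous_snd.continuousOn.integrableOn_compact hKc),
    ← integral_inter_add_sdiff hH (continuous_snd.continuousOn.integrableOn_compact hCc), hCH]
  refine mul_le_mul_of_nonneg_left (add_le_add ?_ ?_) (inv_nonneg.2 ENNReal.toReal_nonneg)
  · exact hKconv.setIntegral_inter_le_truncatedCone hKc hax hR0 hA hbase hvol
  · exact hKconv.setIntegral_sdiff_le_truncatedCone hKc hax hR0 hA hbase.le hvol hvol'

/-- For a spherically symmetric convex body K cut by the hyperplane through its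
center of gravity orthogonal to the axis, if C is the cone with the same base disk,
apex on the positive axis, matching Vol(C⁺) = Vol(K⁺) and Vol(C) = Vol(K), then the
axial coordinate of cg(C) is at least that of cg(K). -/
theorem cone_centerOfGravity_shift (n : ℕ)
    (K : Set (EuclideanSpace ℝ (Fin n) × ℝ))
    (hKc : IsCompact K) (hKconv : Convex ℝ K) (hvol : 0 < (volume K).toReal)
    (hsym : ∀ lam : ℝ, {x | (x, lam) ∈ K} = ∅ ∨
      ∃ r : ℝ, 0 ≤ r ∧ {x | (x, lam) ∈ K}
        = Metric.closedBall (0 : EuclideanSpace ℝ (Fin n)) r)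
    (c : ℝ) (hc : c = (volume K).toReal⁻¹ * ∫ p in K, p.2)
    (R0 A B : ℝ) (hR0 : 0 < R0) (hA : c < A) (hB : B ≤ c)
    (hbase : {x | (x, c) ∈ K} = Metric.closedBall (0 : EuclideanSpace ℝ (Fin n)) R0)
    (C : Set (EuclideanSpace ℝ (Fin n) × ℝ))
    (hC : C = {p | p.2 ∈ Set.Icc B A ∧ ‖p.1‖ ≤ (A - p.2) / (A - c) * R0})
    (hvplus : volume (C ∩ {p | c ≤ p.2}) = volume (K ∩ {p | c ≤ p.2}))
    (hvtot : volume C = volume K) :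
    (volume K).toReal⁻¹ * ∫ p in K, p.2 ≤ (volume C).toReal⁻¹ * ∫ p in C, p.2 :=
  cone_centerOfGravity_shift_general n K hKc hKconv hsym c R0 A B hR0 hA hB hbase C hC hvplus hvtot
end
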